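/- Let p, q be positive integers, V ∈ ℝ^{p×n}, T ∈ ℝ^{p×q}, and set X = Vᵀ(I_p + TTᵀ)⁻¹V. Define V₊ = [C ; (V ⊗ I_r)A] ∈ ℝ^{(l+rp)×n} (C stacked above (V ⊗ I_r)A) and T₊ = [[0_{l×m}, 0_{l×rq}],[(V ⊗ I_r)B, T ⊗ I_r]] ∈ ℝ^{(l+rp)×(m+rq)}. Then I_{rn} + BBᵀ(X ⊗ I_r) is invertible and D(X) = V₊ᵀ(I_{l+rp} + T₊T₊ᵀ)⁻¹V₊ (the inductive step establishing the ⋉-block-Toeplitz closed form of the fixed point iterates). -/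

import Mathlib

open Matrix
open scoped Kronecker

/-- The SDARE Riccati operator `D(X) = Aᵀ (X ⊗ I_r) (I + B Bᵀ (X ⊗ I_r))⁻¹ A + Cᵀ C`,
with `rn` realized as the index type `Fin n × Fin r`. -/
noncomputable def Dop {n m l r : ℕ}
    (A : Matrix (Fin n × Fin r) (Fin n) ℝ)
    (B : Matrix (Fin n × Fin r) (Fin m) ℝ)
    (C : Matrix (Fin l) (Fin n) ℝ)
    (X : Matrix (Fin n) (Fin n) ℝ) : Matrix (Fin n) (Fin n) ℝ :=
  Aᵀ * (X ⊗ₖ (1 : Matrix (Fin r) (Fin r) ℝ)) *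
      (1 + B * Bᵀ * (X ⊗ₖ (1 : Matrix (Fin r) (Fin r) ℝ)))⁻¹ * A + Cᵀ * C

/-!
Write `W = V ⊗ I_r`, `S = T ⊗ I_r` and `N = I + S Sᵀ`, so that `X ⊗ I_r = Wᵀ N⁻¹ W`, and let
`M = N + W B Bᵀ Wᵀ`; both `N` and `M` are positive definite. The push-through identity
`M N⁻¹ W = W (I + B Bᵀ Wᵀ N⁻¹ W)` gives `(X ⊗ I_r)(I + B Bᵀ (X ⊗ I_r))⁻¹ = Wᵀ M⁻¹ W`, while the
matrix determinant lemma `det M = det N · det (I + B Bᵀ Wᵀ N⁻¹ W)` gives the invertibility.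
On the other side `I + T₊ T₊ᵀ` is block diagonal with blocks `I` and `M`, so
`V₊ᵀ (I + T₊ T₊ᵀ)⁻¹ V₊ = Cᵀ C + Aᵀ Wᵀ M⁻¹ W A`.
-/

namespace Matrix

variable {α : Type*} [CommRing α] {a b c p q k l : Type*}

section Kronecker

variable [DecidableEq c]

theorem kronecker_one_transpose (M : Matrix a b α) :
    (M ⊗ₖ (1 : Matrix c c α))ᵀ = Mᵀ ⊗ₖ (1 : Matrix c c α) := by
  rw [← kroneckerMap_transpose, transpose_one]

theorem mul_kronecker_one [Fintype b] [Fintype c] (M : Matrix a b α) (N : Matrix b p α) :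
    (M * N) ⊗ₖ (1 : Matrix c c α) = (M ⊗ₖ (1 : Matrix c c α)) * (N ⊗ₖ (1 : Matrix c c α)) := by
  simpa using mul_kronecker_mul M N (1 : Matrix c c α) (1 : Matrix c c α)

theorem inv_kronecker_one [Fintype a] [DecidableEq a] [Fintype c] (M : Matrix a a α) :
    M⁻¹ ⊗ₖ (1 : Matrix c c α) = (M ⊗ₖ (1 : Matrix c c α))⁻¹ := by
  simpa using (inv_kronecker M (1 : Matrix c c α)).symm

theorem transpose_mul_inv_one_add_mul_transpose_mul_kronecker_one
    [Fintype p] [Fintype q] [DecidableEq p] [Fintype c]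
    (V : Matrix p a α) (T : Matrix p q α) :
    (Vᵀ * (1 + T * Tᵀ)⁻¹ * V) ⊗ₖ (1 : Matrix c c α) =
      (V ⊗ₖ (1 : Matrix c c α))ᵀ *
        (1 + (T ⊗ₖ (1 : Matrix c c α)) * (T ⊗ₖ (1 : Matrix c c α))ᵀ)⁻¹ *
        (V ⊗ₖ (1 : Matrix c c α)) := by
  rw [mul_kronecker_one, mul_kronecker_one, inv_kronecker_one, add_kronecker, one_kronecker_one,
    mul_kronecker_one, kronecker_one_transpose, kronecker_one_transpose]

end Kronecker

section PushThrough

variable [Fintype a] [Fintype b] [Fintype p] [DecidableEq b] [DecidableEq p]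
  {N : Matrix p p α} (U : Matrix a p α) (W : Matrix p b α) (K : Matrix b a α)

theorem isUnit_det_one_add_mul_mul_inv_mul (hN : IsUnit N.det)
    (hM : IsUnit (N + W * K * U).det) : IsUnit (1 + K * (U * N⁻¹ * W)).det := by
  rw [Matrix.mul_assoc W, det_add_mul W (K * U) hN] at hM
  simpa only [Matrix.mul_assoc] using isUnit_of_mul_isUnit_right hM

theorem mul_inv_mul_mul_inv_one_add_mul (hN : IsUnit N.det)
    (hM : IsUnit (N + W * K * U).det) :
    U * N⁻¹ * W * (1 + K * (U * N⁻¹ * W))⁻¹ = U * (N + W * K * U)⁻¹ * W := by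
  set G := 1 + K * (U * N⁻¹ * W)
  have hG : IsUnit G.det := isUnit_det_one_add_mul_mul_inv_mul U W K hN hM
  have push : (N + W * K * U) * (N⁻¹ * W) = W * G := by
    simp only [G, Matrix.add_mul, Matrix.mul_add, Matrix.mul_one,
      mul_nonsing_inv_cancel_left _ _ hN, Matrix.mul_assoc]
  have hNW : N⁻¹ * W = (N + W * K * U)⁻¹ * (W * G) := by
    rw [← push, nonsing_inv_mul_cancel_left _ _ hM]
  rw [Matrix.mul_assoc U, hNW, ← Matrix.mul_assoc, ← Matrix.mul_assoc,
    mul_nonsing_inv_cancel_right _ _ hG, Matrix.mul_assoc]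

end PushThrough

theorem fromRows_transpose_mul_inv_one_add_fromBlocks_mul_transpose_mul_fromRows
    [Fintype b] [Fintype q] [Fintype k] [Fintype l] [DecidableEq k] [DecidableEq l]
    (C : Matrix l a α) (Z : Matrix k a α) (P : Matrix k b α) (S : Matrix k q α)
    (hM : IsUnit (1 + S * Sᵀ + P * Pᵀ).det) :
    (fromRows C Z)ᵀ *
        (1 + fromBlocks (0 : Matrix l b α) 0 P S * (fromBlocks (0 : Matrix l b α) 0 P S)ᵀ)⁻¹ *
        fromRows C Z = Cᵀ * C + Zᵀ * (1 + S * Sᵀ + P * Pᵀ)⁻¹ * Z := by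
  have block : 1 + fromBlocks (0 : Matrix l b α) 0 P S * (fromBlocks (0 : Matrix l b α) 0 P S)ᵀ =
      fromBlocks 1 0 0 (1 + S * Sᵀ + P * Pᵀ) := by
    rw [fromBlocks_transpose, fromBlocks_multiply, ← fromBlocks_one, fromBlocks_add]
    simp only [transpose_zero, Matrix.mul_zero, Matrix.zero_mul, add_zero, add_comm (P * Pᵀ),
      add_assoc]
  rw [block, inv_fromBlocks_zero₂₁_of_isUnit_iff _ _ _
      (iff_of_true isUnit_one ((isUnit_iff_isUnit_det _).mpr hM)),
    transpose_fromRows, fromCols_mul_fromBlocks, fromCols_mul_fromRows]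
  simp only [inv_one, Matrix.mul_one, Matrix.mul_zero, Matrix.zero_mul, neg_zero, add_zero,
    zero_add]

theorem posSemidef_mul_transpose [Fintype k] [Fintype q] (S : Matrix k q ℝ) :
    (S * Sᵀ).PosSemidef := by
  simpa only [conjTranspose_eq_transpose_of_trivial] using posSemidef_self_mul_conjTranspose S

end Matrix

theorem stmt6 {n m l r p q : ℕ}
    (A : Matrix (Fin n × Fin r) (Fin n) ℝ)
    (B : Matrix (Fin n × Fin r) (Fin m) ℝ)
    (C : Matrix (Fin l) (Fin n) ℝ)
    (V : Matrix (Fin p) (Fin n) ℝ) (T : Matrix (Fin p) (Fin q) ℝ)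
    (X : Matrix (Fin n) (Fin n) ℝ)
    (hX : X = Vᵀ * (1 + T * Tᵀ)⁻¹ * V)
    (Vp : Matrix (Fin l ⊕ Fin p × Fin r) (Fin n) ℝ)
    (Tp : Matrix (Fin l ⊕ Fin p × Fin r) (Fin m ⊕ Fin q × Fin r) ℝ)
    (hVp : Vp = Matrix.fromRows C ((V ⊗ₖ (1 : Matrix (Fin r) (Fin r) ℝ)) * A))
    (hTp : Tp = Matrix.fromBlocks (0 : Matrix (Fin l) (Fin m) ℝ)
        (0 : Matrix (Fin l) (Fin q × Fin r) ℝ)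
        ((V ⊗ₖ (1 : Matrix (Fin r) (Fin r) ℝ)) * B)
        (T ⊗ₖ (1 : Matrix (Fin r) (Fin r) ℝ))) :
    IsUnit (1 + B * Bᵀ * (X ⊗ₖ (1 : Matrix (Fin r) (Fin r) ℝ))) ∧
    Dop A B C X = Vpᵀ * (1 + Tp * Tpᵀ)⁻¹ * Vp := by
  set W := V ⊗ₖ (1 : Matrix (Fin r) (Fin r) ℝ)
  set S := T ⊗ₖ (1 : Matrix (Fin r) (Fin r) ℝ)
  have hXW : X ⊗ₖ (1 : Matrix (Fin r) (Fin r) ℝ) = Wᵀ * (1 + S * Sᵀ)⁻¹ * W := by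
    rw [hX, transpose_mul_inv_one_add_mul_transpose_mul_kronecker_one]
  have hWB : W * B * (W * B)ᵀ = W * (B * Bᵀ) * Wᵀ := by
    rw [transpose_mul, Matrix.mul_assoc, Matrix.mul_assoc, Matrix.mul_assoc]
  have hN : IsUnit (1 + S * Sᵀ).det := (isUnit_iff_isUnit_det _).mp
    (PosDef.one.add_posSemidef (posSemidef_mul_transpose S)).isUnit
  have hM : IsUnit (1 + S * Sᵀ + W * (B * Bᵀ) * Wᵀ).det := by
    rw [← hWB, add_assoc]
    exact (isUnit_iff_isUnit_det _).mp (PosDef.one.add_posSemidef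
      ((posSemidef_mul_transpose S).add (posSemidef_mul_transpose (W * B)))).isUnit
  refine ⟨?_, ?_⟩
  · rw [isUnit_iff_isUnit_det, hXW]
    exact isUnit_det_one_add_mul_mul_inv_mul Wᵀ W (B * Bᵀ) hN hM
  · rw [hVp, hTp, fromRows_transpose_mul_inv_one_add_fromBlocks_mul_transpose_mul_fromRows _ _ _ _
      (hWB ▸ hM), Dop, hXW, Matrix.mul_assoc Aᵀ, mul_inv_mul_mul_inv_one_add_mul Wᵀ W _ hN hM,
      hWB, add_comm, transpose_mul]
    simp only [Matrix.mul_assoc]
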